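/- arXiv:1509.07775 — 2 statements merged into one kernel-verified Lean document; each statement's English description precedes it below -/
import Mathlib

section
/- Assume complete vertical transmission v_w = 1 (so v_u = 0) and R_0w = b_f ψ φ_w/((μ_a+ψ)μ_fw) > 1. Then the complete-infection point (A_u, A_w, F_u, F_w, M_u, M_w) = (0, K_a(1 − 1/R_0w), 0, b_f ψ A_w/μ_fw, 0, b_m ψ A_w/μ_mw) is an equilibrium of the Wolbachia mosquito model with A_w, F_w, M_w > 0, and it is the unique equilibrium with A_u = F_u = M_u = 0 and A_w > 0. -/
/-- The Wolbachia mosquito model vector field on states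
`x = (A_u, A_w, F_u, F_w, M_u, M_w)` (indices 0..5). -/
noncomputable def wolbField (bf vw φu φw ψ μa μfu μfw μmu μmw Ka : ℝ)
    (x : Fin 6 → ℝ) : Fin 6 → ℝ :=
  ![ φu * x 2 * (x 4 / (x 4 + x 5)) * (1 - (x 0 + x 1) / Ka)
      + (1 - vw) * (φw * x 3 * (x 4 / (x 4 + x 5)) * (1 - (x 0 + x 1) / Ka)
          + φw * x 3 * (1 - x 4 / (x 4 + x 5)) * (1 - (x 0 + x 1) / Ka))
      - (μa + ψ) * x 0,
    vw * (φw * x 3 * (x 4 / (x 4 + x 5)) * (1 - (x 0 + x 1) / Ka)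
          + φw * x 3 * (1 - x 4 / (x 4 + x 5)) * (1 - (x 0 + x 1) / Ka))
      - (μa + ψ) * x 1,
    bf * ψ * x 0 - μfu * x 2,
    bf * ψ * x 1 - μfw * x 3,
    (1 - bf) * ψ * x 0 - μmu * x 4,
    (1 - bf) * ψ * x 1 - μmw * x 5 ]

/-! With `A_u = F_u = M_u = 0` and `v_w = 1` the field reduces to the infected compartments.
The `F_w` and `M_w` equations express `F_w` and `M_w` linearly in `A_w`; substituting into the
`A_w` equation and dividing by `A_w ≠ 0` leaves an affine equation in `A_w` whose only root is
`K_a (1 - 1 / R_0w)`, positive exactly when `R_0w > 1`. -/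

theorem logistic_balance_iff {b φ d μ K a : ℝ} (hbφ : b * φ ≠ 0) (hμ : μ ≠ 0) (hK : K ≠ 0)
    (ha : a ≠ 0) :
    φ * (b * a / μ) * (1 - a / K) = d * a ↔ a = K * (1 - 1 / (b * φ / (d * μ))) := by
  obtain ⟨hb, hφ⟩ := mul_ne_zero_iff.1 hbφ
  field_simp
  constructor <;> intro h <;> linear_combination -h

noncomputable def completeInfectionPoint (bf φw ψ μa μfw μmw Ka : ℝ) : Fin 6 → ℝ :=
  let Aw := Ka * (1 - 1 / (bf * ψ * φw / ((μa + ψ) * μfw)))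
  ![0, Aw, 0, bf * ψ * Aw / μfw, 0, (1 - bf) * ψ * Aw / μmw]

section

variable {bf φu φw ψ μa μfu μfw μmu μmw Ka : ℝ} {x : Fin 6 → ℝ}

theorem wolbField_one_of_uninfected_zero (h0 : x 0 = 0) (h2 : x 2 = 0) (h4 : x 4 = 0) :
    wolbField bf 1 φu φw ψ μa μfu μfw μmu μmw Ka x =
      ![0, φw * x 3 * (1 - x 1 / Ka) - (μa + ψ) * x 1, 0, bf * ψ * x 1 - μfw * x 3,
        0, (1 - bf) * ψ * x 1 - μmw * x 5] := by
  ext i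
  fin_cases i <;> simp [wolbField, h0, h2, h4]

theorem wolbField_one_eq_zero_iff (hbfψφw : bf * ψ * φw ≠ 0) (hμfw : μfw ≠ 0) (hμmw : μmw ≠ 0)
    (hKa : Ka ≠ 0) (h0 : x 0 = 0) (h1 : x 1 ≠ 0) (h2 : x 2 = 0) (h4 : x 4 = 0) :
    wolbField bf 1 φu φw ψ μa μfu μfw μmu μmw Ka x = 0 ↔
      x = completeInfectionPoint bf φw ψ μa μfw μmw Ka := by
  have hx : x = ![0, x 1, 0, x 3, 0, x 5] := by
    ext i; fin_cases i <;> simp [h0, h2, h4]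
  have balance := logistic_balance_iff (d := μa + ψ) hbfψφw hμfw hKa h1
  rw [wolbField_one_of_uninfected_zero h0 h2 h4, completeInfectionPoint]
  conv_rhs => rw [hx]
  simp only [Fin.isValue, Matrix.cons_eq_zero_iff, sub_eq_zero, Matrix.zero_empty, and_true,
    true_and, Matrix.vecCons_inj]
  constructor
  · rintro ⟨hA, hF, hM⟩
    have hx3 : x 3 = bf * ψ * x 1 / μfw := by field_simp; linarith
    have hx1 := balance.1 (hx3 ▸ hA)
    exact ⟨hx1, hx1 ▸ hx3, by rw [← hx1]; field_simp; linarith⟩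
  · rintro ⟨hx1, hx3, hx5⟩
    rw [← hx1] at hx3 hx5
    refine ⟨?_, ?_, ?_⟩
    · rw [hx3]; exact balance.2 hx1
    · rw [hx3]; field_simp
    · rw [hx5]; field_simp

end

theorem complete_infection_equilibrium_exists_unique_general
    (bf φu φw ψ μa μfu μfw μmu μmw Ka : ℝ)
    (hbf : 0 < bf) (hbf1 : bf < 1)
    (hψ : 0 < ψ)
    (hμfw : 0 < μfw) (hμmw : 0 < μmw)
    (hKa : 0 < Ka)
    (hR0w : 1 < bf * ψ * φw / ((μa + ψ) * μfw))
    (Aw : ℝ) (hAw : Aw = Ka * (1 - 1 / (bf * ψ * φw / ((μa + ψ) * μfw))))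
    (x0 : Fin 6 → ℝ)
    (hx0 : x0 = ![0, Aw, 0, bf * ψ * Aw / μfw, 0, (1 - bf) * ψ * Aw / μmw]) :
    (0 < x0 1 ∧ 0 < x0 3 ∧ 0 < x0 5) ∧
    wolbField bf 1 φu φw ψ μa μfu μfw μmu μmw Ka x0 = 0 ∧
    ∀ x : Fin 6 → ℝ, 0 < x 4 + x 5 →
      wolbField bf 1 φu φw ψ μa μfu μfw μmu μmw Ka x = 0 →
      x 0 = 0 → x 2 = 0 → x 4 = 0 → 0 < x 1 → x = x0 := by
  have hAw_pos : 0 < Aw :=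
    hAw ▸ mul_pos hKa (sub_pos.2 ((div_lt_one (zero_lt_one.trans hR0w)).2 hR0w))
  have hpoint : x0 = completeInfectionPoint bf φw ψ μa μfw μmw Ka := by
    rw [hx0, hAw]; rfl
  have hiff (x : Fin 6 → ℝ) (h0 : x 0 = 0) (h1 : x 1 ≠ 0) (h2 : x 2 = 0) (h4 : x 4 = 0) :
      wolbField bf 1 φu φw ψ μa μfu μfw μmu μmw Ka x = 0 ↔ x = x0 :=
    hpoint ▸ wolbField_one_eq_zero_iff (div_ne_zero_iff.1 (zero_lt_one.trans hR0w).ne').1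
      hμfw.ne' hμmw.ne' hKa.ne' h0 h1 h2 h4
  have hbf' : 0 < 1 - bf := sub_pos.2 hbf1
  subst hx0
  refine ⟨⟨hAw_pos, ?_, ?_⟩, ?_, ?_⟩
  · show 0 < bf * ψ * Aw / μfw; positivity
  · show 0 < (1 - bf) * ψ * Aw / μmw; positivity
  · exact (hiff _ rfl hAw_pos.ne' rfl rfl).2 rfl
  · exact fun x _ hx h0 h2 h4 h1 => (hiff x h0 h1.ne' h2 h4).1 hx

/-- under complete vertical transmission (`v_w = 1`) and `R₀w > 1`,
the complete-infection point is a strictly positive (in its infected components)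
equilibrium, and it is the unique equilibrium with `A_u = F_u = M_u = 0` and
`A_w > 0`. -/
theorem complete_infection_equilibrium_exists_unique
    (bf φu φw ψ μa μfu μfw μmu μmw Ka : ℝ)
    (hbf : 0 < bf) (hbf1 : bf < 1)
    (hφu : 0 < φu) (hφw : 0 < φw) (hψ : 0 < ψ) (hμa : 0 < μa)
    (hμfu : 0 < μfu) (hμfw : 0 < μfw) (hμmu : 0 < μmu) (hμmw : 0 < μmw)
    (hKa : 0 < Ka)
    (hR0w : 1 < bf * ψ * φw / ((μa + ψ) * μfw))
    (Aw : ℝ) (hAw : Aw = Ka * (1 - 1 / (bf * ψ * φw / ((μa + ψ) * μfw))))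
    (x0 : Fin 6 → ℝ)
    (hx0 : x0 = ![0, Aw, 0, bf * ψ * Aw / μfw, 0, (1 - bf) * ψ * Aw / μmw]) :
    (0 < x0 1 ∧ 0 < x0 3 ∧ 0 < x0 5) ∧
    wolbField bf 1 φu φw ψ μa μfu μfw μmu μmw Ka x0 = 0 ∧
    ∀ x : Fin 6 → ℝ, 0 < x 4 + x 5 →
      wolbField bf 1 φu φw ψ μa μfu μfw μmu μmw Ka x = 0 →
      x 0 = 0 → x 2 = 0 → x 4 = 0 → 0 < x 1 → x = x0 :=
  complete_infection_equilibrium_exists_unique_general bf φu φw ψ μa μfu μfw μmu μmw Ka hbf hbf1 hψ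
    hμfw hμmw hKa hR0w Aw hAw x0 hx0
end

section
/- Assume complete vertical transmission v_w = 1 (so v_u = 0) and R_0w = b_f ψ φ_w/((μ_a+ψ)μ_fw) > 1. Then every eigenvalue (over ℂ) of the derivative (6×6 Jacobian matrix) of the Wolbachia mosquito model vector field, evaluated at the complete-infection equilibrium (0, K_a(1 − 1/R_0w), 0, b_f ψ A_w/μ_fw, 0, b_m ψ A_w/μ_mw) with A_w = K_a(1 − 1/R_0w), has negative real part (so the complete-infection equilibrium is locally asymptotically stable). -/
/-!
With `v_w = 1` the two birth terms of `A_w` add up to `φ_w F_w (1 - N_A / K_a)`, so the male ratio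
drops out of the `A_w` equation, while the `A_u` birth term vanishes to first order at the
equilibrium, where `A_u = F_u = M_u = 0`. The Jacobian is then block triangular: the uninfected
compartments and `M_w` contribute the eigenvalues `-(μ_a + ψ)`, `-μ_fu`, `-μ_mu`, `-μ_mw`, and the
`(A_w, F_w)` block has characteristic polynomial `λ² + pλ + q` with `p, q > 0`, because at the
equilibrium `φ_w (1 - A_w / K_a) b_f ψ = (μ_a + ψ) μ_fw`; the roots of such a polynomial lie in
the open left half-plane.
-/

open Matrix Module.End

theorem Complex.re_neg_of_sq_add_mul_add_eq_zero {p q : ℝ} (hp : 0 < p) (hq : 0 < q) {z : ℂ}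
    (hz : z ^ 2 + p * z + q = 0) : z.re < 0 := by
  have hre := congrArg Complex.re hz
  have him := congrArg Complex.im hz
  simp only [sq, Complex.add_re, Complex.add_im, Complex.mul_re, Complex.mul_im,
    Complex.ofReal_re, Complex.ofReal_im, Complex.zero_re, Complex.zero_im] at hre him
  have him_factor : z.im * (2 * z.re + p) = 0 := by linarith
  -- either `z` is real, and `z² + pz + q > 0` for `z ≥ 0`, or `Re z = -p / 2`
  rcases mul_eq_zero.mp him_factor with h | h
  · nlinarith [sq_nonneg z.re]
  · nlinarith

theorem Complex.add_ofReal_ne_zero_of_re_nonneg {z : ℂ} (hz : 0 ≤ z.re) {r : ℝ} (hr : 0 < r) :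
    z + r ≠ 0 := by
  intro h
  have := congrArg Complex.re h
  simp only [Complex.add_re, Complex.ofReal_re, Complex.zero_re] at this
  linarith

theorem Matrix.exists_mulVec_eq_smul_of_isRoot_charpoly {K n : Type*} [Field K] [Fintype n]
    [DecidableEq n] {A : Matrix n n K} {μ : K} (h : A.charpoly.IsRoot μ) :
    ∃ v, v ≠ 0 ∧ A *ᵥ v = μ • v := by
  rw [← Matrix.charpoly_toLin', ← hasEigenvalue_iff_isRoot_charpoly] at h
  obtain ⟨v, hv⟩ := h.exists_hasEigenvector
  exact ⟨v, hv.2, by simpa using hv.apply_eq_smul⟩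

namespace WolbachiaModel

def cieJacobian (a c e β γ d₂ d₃ d₄ d₅ : ℝ) : Matrix (Fin 6) (Fin 6) ℝ :=
  !![-a, 0, 0, 0, 0, 0;
     -c, -(c + a), 0, e, 0, 0;
     β, 0, -d₂, 0, 0, 0;
     0, β, 0, -d₃, 0, 0;
     γ, 0, 0, 0, -d₄, 0;
     0, γ, 0, 0, 0, -d₅]

theorem re_neg_of_cieJacobian_mulVec_eq_smul {a c e β γ d₂ d₃ d₄ d₅ : ℝ} (ha : 0 < a)
    (hc : 0 ≤ c) (hd₂ : 0 < d₂) (hd₃ : 0 < d₃) (hd₄ : 0 < d₄) (hd₅ : 0 < d₅)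
    (he : e * β < (c + a) * d₃) {μ : ℂ} {v : Fin 6 → ℂ} (hv : v ≠ 0)
    (hμ : (cieJacobian a c e β γ d₂ d₃ d₄ d₅).map Complex.ofReal *ᵥ v = μ • v) : μ.re < 0 := by
  by_contra! hre
  simp only [funext_iff, Fin.forall_fin_succ, IsEmpty.forall_iff, cieJacobian, mulVec,
    dotProduct, Fin.sum_univ_six, map_apply, of_apply, Pi.smul_apply, smul_eq_mul, cons_val',
    cons_val, cons_val_zero, cons_val_one, cons_val_succ, cons_val_fin_one, Fin.succ_zero_eq_one,
    Fin.succ_one_eq_two, Fin.reduceSucc, Complex.ofReal_neg, Complex.ofReal_add,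
    Complex.ofReal_zero, zero_mul, add_zero, zero_add, and_true] at hμ
  obtain ⟨r0, r1, r2, r3, r4, r5⟩ := hμ
  have cancel {r : ℝ} {w : ℂ} (hr : 0 < r) (h : (μ + r) * w = 0) : w = 0 :=
    (mul_eq_zero.mp h).resolve_left (Complex.add_ofReal_ne_zero_of_re_nonneg hre hr)
  have hv0 : v 0 = 0 := cancel ha (by linear_combination -r0)
  have hv2 : v 2 = 0 := cancel hd₂ (by linear_combination -r2 + β * hv0)
  have hv4 : v 4 = 0 := cancel hd₄ (by linear_combination -r4 + γ * hv0)
  by_cases hv1 : v 1 = 0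
  · have hv3 : v 3 = 0 := cancel hd₃ (by linear_combination -r3 + β * hv1)
    have hv5 : v 5 = 0 := cancel hd₅ (by linear_combination -r5 + γ * hv1)
    exact hv (funext fun i => by fin_cases i <;> assumption)
  · have hquad :
        (μ ^ 2 + ((c + a + d₃ : ℝ) : ℂ) * μ + (((c + a) * d₃ - e * β : ℝ) : ℂ)) * v 1 = 0 := by
      push_cast
      linear_combination -(μ + d₃) * r1 - e * r3 - c * (μ + d₃) * hv0
    have := Complex.re_neg_of_sq_add_mul_add_eq_zero (by linarith) (by linarith)
      ((mul_eq_zero.mp hquad).resolve_right hv1)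
    linarith

lemma wolbField_one (bf φu φw ψ μa μfu μfw μmu μmw Ka : ℝ) :
    wolbField bf 1 φu φw ψ μa μfu μfw μmu μmw Ka = fun x =>
      ![φu * x 2 * (x 4 / (x 4 + x 5)) * (1 - (x 0 + x 1) / Ka) - (μa + ψ) * x 0,
        φw * x 3 * (1 - (x 0 + x 1) / Ka) - (μa + ψ) * x 1,
        bf * ψ * x 0 - μfu * x 2,
        bf * ψ * x 1 - μfw * x 3,
        (1 - bf) * ψ * x 0 - μmu * x 4,
        (1 - bf) * ψ * x 1 - μmw * x 5] := by
  funext x i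
  fin_cases i <;> simp only [wolbField, Fin.isValue, sub_self, zero_mul, add_zero, one_mul,
    Fin.zero_eta, Fin.mk_one, Fin.reduceFinMk, cons_val_zero, cons_val_one, cons_val,
    Nat.succ_eq_add_one, Nat.reduceAdd, sub_left_inj]
  ring

theorem hasFDerivAt_wolbField_one (bf φu φw ψ μa μfu μfw μmu μmw Ka Aw Fw Mw : ℝ)
    (hMw : Mw ≠ 0) :
    HasFDerivAt (wolbField bf 1 φu φw ψ μa μfu μfw μmu μmw Ka)
      (toLin' (cieJacobian (μa + ψ) (φw * Fw / Ka) (φw * (1 - Aw / Ka)) (bf * ψ) ((1 - bf) * ψ)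
        μfu μfw μmu μmw)).toContinuousLinearMap
      ![0, Aw, 0, Fw, 0, Mw] := by
  set x₀ : Fin 6 → ℝ := ![0, Aw, 0, Fw, 0, Mw]
  have hp (i : Fin 6) : HasFDerivAt (fun x : Fin 6 → ℝ => x i)
      (ContinuousLinearMap.proj (R := ℝ) i) x₀ := hasFDerivAt_apply i x₀
  -- the derivative of the male ratio is multiplied by `F_u = 0`, so it need not be computed
  have hm : DifferentiableAt ℝ (fun x : Fin 6 → ℝ => x 4 / (x 4 + x 5)) x₀ := by
    fun_prop (disch := simpa [x₀] using hMw)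
  have hq : HasFDerivAt (fun x : Fin 6 → ℝ => 1 - (x 0 + x 1) / Ka)
      (-(Ka⁻¹ • (ContinuousLinearMap.proj (R := ℝ) (φ := fun _ : Fin 6 => ℝ) 0
        + ContinuousLinearMap.proj 1))) x₀ := by
    simpa only [div_eq_mul_inv, Pi.add_apply] using
      (((hp 0).add (hp 1)).mul_const Ka⁻¹).const_sub 1
  rw [wolbField_one]
  refine hasFDerivAt_pi'' fun i => ?_
  fin_cases i <;> [
    refine (((((hp 2).const_mul φu).mul hm.hasFDerivAt).mul hq).sub
      ((hp 0).const_mul (μa + ψ))).congr_fderiv ?_;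
    refine ((((hp 3).const_mul φw).mul hq).sub ((hp 1).const_mul (μa + ψ))).congr_fderiv ?_;
    refine (((hp 0).const_mul (bf * ψ)).sub ((hp 2).const_mul μfu)).congr_fderiv ?_;
    refine (((hp 1).const_mul (bf * ψ)).sub ((hp 3).const_mul μfw)).congr_fderiv ?_;
    refine (((hp 0).const_mul ((1 - bf) * ψ)).sub ((hp 4).const_mul μmu)).congr_fderiv ?_;
    refine (((hp 1).const_mul ((1 - bf) * ψ)).sub ((hp 5).const_mul μmw)).congr_fderiv ?_] <;>
  · ext y
    simp only [x₀, cieJacobian, ContinuousLinearMap.comp_apply,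
      LinearMap.coe_toContinuousLinearMap', toLin'_apply, cons_mulVec, empty_mulVec, dotProduct,
      Fin.sum_univ_six, Pi.mul_apply, _root_.add_apply, _root_.sub_apply, _root_.neg_apply,
      _root_.smul_apply, ContinuousLinearMap.proj_apply, smul_eq_mul, smul_add, smul_neg, smul_zero,
      zero_smul, Fin.isValue, Fin.zero_eta, Fin.mk_one, Fin.reduceFinMk, Nat.succ_eq_add_one,
      Nat.reduceAdd, cons_val, cons_val_zero, cons_val_one, mul_zero, zero_mul, zero_div, zero_add,
      add_zero, zero_sub, neg_zero, neg_add_rev, neg_mul]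
    ring

end WolbachiaModel

theorem complete_infection_equilibrium_LAS_general
    (bf φu φw ψ μa μfu μfw μmu μmw Ka : ℝ)
    (hbf : 0 < bf) (hbf1 : bf < 1)
    (hφw : 0 < φw) (hψ : 0 < ψ) (hμa : 0 < μa)
    (hμfu : 0 < μfu) (hμfw : 0 < μfw) (hμmu : 0 < μmu) (hμmw : 0 < μmw)
    (hKa : 0 < Ka)
    (hR0w : 1 < bf * ψ * φw / ((μa + ψ) * μfw))
    (Aw : ℝ) (hAw : Aw = Ka * (1 - 1 / (bf * ψ * φw / ((μa + ψ) * μfw))))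
    (x0 : Fin 6 → ℝ)
    (hx0 : x0 = ![0, Aw, 0, bf * ψ * Aw / μfw, 0, (1 - bf) * ψ * Aw / μmw])
    (J : Matrix (Fin 6) (Fin 6) ℝ)
    (hJ : J = LinearMap.toMatrix' (fderiv ℝ
        (wolbField bf 1 φu φw ψ μa μfu μfw μmu μmw Ka) x0).toLinearMap) :
    ∀ lam : ℂ, (J.map Complex.ofReal).charpoly.IsRoot lam → lam.re < 0 := by
  intro μ hμ
  have hAw_pos : 0 < Aw := by
    rw [hAw]
    exact mul_pos hKa (sub_pos.2 ((div_lt_one (by linarith)).2 hR0w))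
  have hbm : 0 < 1 - bf := sub_pos.2 hbf1
  have hJ_eq : J = WolbachiaModel.cieJacobian (μa + ψ) (φw * (bf * ψ * Aw / μfw) / Ka)
      (φw * (1 - Aw / Ka)) (bf * ψ) ((1 - bf) * ψ) μfu μfw μmu μmw := by
    rw [hJ, hx0, (WolbachiaModel.hasFDerivAt_wolbField_one bf φu φw ψ μa μfu μfw μmu μmw Ka Aw _ _
      (by positivity)).fderiv]
    exact LinearMap.toMatrix'_toLin' _
  have h_equilibrium : φw * (1 - Aw / Ka) * (bf * ψ) = (μa + ψ) * μfw := by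
    rw [hAw]
    field_simp
    ring
  have hc : 0 < φw * (bf * ψ * Aw / μfw) / Ka := by positivity
  subst hJ_eq
  obtain ⟨v, hv, hμv⟩ := Matrix.exists_mulVec_eq_smul_of_isRoot_charpoly hμ
  exact WolbachiaModel.re_neg_of_cieJacobian_mulVec_eq_smul (by positivity) hc.le
    hμfu hμfw hμmu hμmw (by nlinarith [mul_pos hc hμfw]) hv hμv

/-- under complete vertical transmission (`v_w = 1`) and `R₀w > 1`,
every complex eigenvalue of the 6×6 Jacobian matrix of the Wolbachia model at
the complete-infection equilibrium has negative real part (local asymptotic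
stability of the CIE). -/
theorem complete_infection_equilibrium_LAS
    (bf φu φw ψ μa μfu μfw μmu μmw Ka : ℝ)
    (hbf : 0 < bf) (hbf1 : bf < 1)
    (hφu : 0 < φu) (hφw : 0 < φw) (hψ : 0 < ψ) (hμa : 0 < μa)
    (hμfu : 0 < μfu) (hμfw : 0 < μfw) (hμmu : 0 < μmu) (hμmw : 0 < μmw)
    (hKa : 0 < Ka)
    (hR0w : 1 < bf * ψ * φw / ((μa + ψ) * μfw))
    (Aw : ℝ) (hAw : Aw = Ka * (1 - 1 / (bf * ψ * φw / ((μa + ψ) * μfw))))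
    (x0 : Fin 6 → ℝ)
    (hx0 : x0 = ![0, Aw, 0, bf * ψ * Aw / μfw, 0, (1 - bf) * ψ * Aw / μmw])
    (J : Matrix (Fin 6) (Fin 6) ℝ)
    (hJ : J = LinearMap.toMatrix' (fderiv ℝ
        (wolbField bf 1 φu φw ψ μa μfu μfw μmu μmw Ka) x0).toLinearMap) :
    ∀ lam : ℂ, (J.map Complex.ofReal).charpoly.IsRoot lam → lam.re < 0 :=
  complete_infection_equilibrium_LAS_general bf φu φw ψ μa μfu μfw μmu μmw Ka hbf hbf1 hφw hψ hμa
    hμfu hμfw hμmu hμmw hKa hR0w Aw hAw x0 hx0 J hJ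
end
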